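/- arXiv:2508.16285 — 5 statements merged into one kernel-verified Lean document; each statement's English description precedes it below -/
import Mathlib

section
/- The Quadratic Rule does not satisfy maximal ℓ1 social welfare: for three voters with ballots (0.01, 0.99), (0.01, 0.99), (0.99, 0.01), the Quadratic Rule outputs approximately (0.364, 0.636) with total ℓ1 distance ≈ 2.668 to the ballots, while the allocation (0.2, 0.8) has total ℓ1 distance 2.34, which is strictly smaller. -/
noncomputable def meanRule {ι : Type*} [Fintype ι] {m : ℕ} (X : ι → Fin m → ℝ) : Fin m → ℝ :=
  fun p => (∑ i, X i p) / (∑ i, ∑ q, X i q)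

def l1 {m : ℕ} (a b : Fin m → ℝ) : ℝ := ∑ p, |a p - b p|

noncomputable def quadRule {n m : ℕ} (X : Fin n → Fin m → ℝ) : Fin m → ℝ :=
  fun p => (∑ i, Real.sqrt (X i p)) / (∑ i, ∑ q, Real.sqrt (X i q))

/-- The Quadratic Rule does not satisfy maximal ℓ1 social welfare: for ballots
(0.01,0.99), (0.01,0.99), (0.99,0.01) the allocation (0.2,0.8) has total ℓ1 cost
2.34, strictly smaller than the cost of the Quadratic Rule output. -/
theorem quadratic_not_max_l1_welfare :
    ∑ i, l1 ![(0.2:ℝ),0.8] (![![(0.01:ℝ),0.99],![0.01,0.99],![0.99,0.01]] i) = 2.34 ∧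
    ∑ i, l1 ![(0.2:ℝ),0.8] (![![(0.01:ℝ),0.99],![0.01,0.99],![0.99,0.01]] i) <
      ∑ i, l1 (quadRule (![![(0.01:ℝ),0.99],![0.01,0.99],![0.99,0.01]]))
        (![![(0.01:ℝ),0.99],![0.01,0.99],![0.99,0.01]] i) := by
  have hq : Real.sqrt 0.01 = 0.1 := by
    rw [show (0.01:ℝ) = 0.1 ^ 2 by norm_num, Real.sqrt_sq (by norm_num)]
  set s := Real.sqrt 0.99 with hs
  have hs0 : 0 ≤ s := Real.sqrt_nonneg _
  have hs2 : s ^ 2 = 0.99 := Real.sq_sqrt (by norm_num)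
  have hsl : 0.99 ≤ s := by nlinarith
  have hsu : s ≤ 1 := by nlinarith
  have hD : (0:ℝ) < 0.1 + s + (0.1 + s) + (s + 0.1) := by linarith
  simp only [l1, quadRule, Fin.sum_univ_two, Fin.sum_univ_three,
    Matrix.cons_val_zero, Matrix.cons_val_one, Matrix.head_cons,
    Matrix.cons_val_two, Matrix.tail_cons, hq, ← hs]
  have habs : |(0.2:ℝ) - 0.01| + |(0.8:ℝ) - 0.99| + (|(0.2:ℝ) - 0.01| + |(0.8:ℝ) - 0.99|) +
      (|(0.2:ℝ) - 0.99| + |(0.8:ℝ) - 0.01|) = 2.34 := by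
    rw [abs_of_nonneg (by norm_num : (0:ℝ) ≤ 0.2 - 0.01),
      abs_of_nonpos (by norm_num : (0.8:ℝ) - 0.99 ≤ 0),
      abs_of_nonpos (by norm_num : (0.2:ℝ) - 0.99 ≤ 0),
      abs_of_nonneg (by norm_num : (0:ℝ) ≤ 0.8 - 0.01)]
    norm_num
  refine ⟨habs, ?_⟩
  rw [habs]
  have ha1l : (0.36:ℝ) ≤ (0.1 + 0.1 + s) / (0.1 + s + (0.1 + s) + (s + 0.1)) := by
    rw [le_div_iff₀ hD]; nlinarith
  have ha1u : (0.1 + 0.1 + s) / (0.1 + s + (0.1 + s) + (s + 0.1)) ≤ (0.37:ℝ) := by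
    rw [div_le_iff₀ hD]; nlinarith
  have ha2l : (0.63:ℝ) ≤ (s + s + 0.1) / (0.1 + s + (0.1 + s) + (s + 0.1)) := by
    rw [le_div_iff₀ hD]; nlinarith
  have ha2u : (s + s + 0.1) / (0.1 + s + (0.1 + s) + (s + 0.1)) ≤ (0.64:ℝ) := by
    rw [div_le_iff₀ hD]; nlinarith
  have h1 := le_abs_self ((0.1 + 0.1 + s) / (0.1 + s + (0.1 + s) + (s + 0.1)) - 0.01)
  have h2 := neg_abs_le ((s + s + 0.1) / (0.1 + s + (0.1 + s) + (s + 0.1)) - 0.99)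
  have h3 := neg_abs_le ((0.1 + 0.1 + s) / (0.1 + s + (0.1 + s) + (s + 0.1)) - 0.99)
  have h4 := le_abs_self ((s + s + 0.1) / (0.1 + s + (0.1 + s) + (s + 0.1)) - 0.01)
  linarith
end

section
/- The Quadratic Rule is not proportional: for three voters over two projects with ballots (0.9, 0.1), (0.5, 0.5), (0.4, 0.6) (as fractions of their tokens), the Quadratic Rule output differs from the proportional (mean) allocation (0.6, 0.4); in particular the first coordinate of the quadratic output is strictly less than 0.6. -/
lemma quad_lt :
    quadRule (![![(0.9:ℝ),0.1],![0.5,0.5],![0.4,0.6]]) 0 < 0.6 := by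
  have h9 : Real.sqrt 0.9 < 0.949 := by
    rw [show (0.949:ℝ) = Real.sqrt (0.949^2) by rw [Real.sqrt_sq]; norm_num]
    apply Real.sqrt_lt_sqrt <;> norm_num
  have h5 : Real.sqrt 0.5 < 0.7072 := by
    rw [show (0.7072:ℝ) = Real.sqrt (0.7072^2) by rw [Real.sqrt_sq]; norm_num]
    apply Real.sqrt_lt_sqrt <;> norm_num
  have h4 : Real.sqrt 0.4 < 0.6325 := by
    rw [show (0.6325:ℝ) = Real.sqrt (0.6325^2) by rw [Real.sqrt_sq]; norm_num]
    apply Real.sqrt_lt_sqrt <;> norm_num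
  have h1 : (0.316:ℝ) < Real.sqrt 0.1 := by
    rw [show (0.316:ℝ) = Real.sqrt (0.316^2) by rw [Real.sqrt_sq]; norm_num]
    apply Real.sqrt_lt_sqrt <;> norm_num
  have h5' : (0.707:ℝ) < Real.sqrt 0.5 := by
    rw [show (0.707:ℝ) = Real.sqrt (0.707^2) by rw [Real.sqrt_sq]; norm_num]
    apply Real.sqrt_lt_sqrt <;> norm_num
  have h6 : (0.7745:ℝ) < Real.sqrt 0.6 := by
    rw [show (0.7745:ℝ) = Real.sqrt (0.7745^2) by rw [Real.sqrt_sq]; norm_num]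
    apply Real.sqrt_lt_sqrt <;> norm_num
  have n9 := Real.sqrt_nonneg (0.9:ℝ)
  have n4 := Real.sqrt_nonneg (0.4:ℝ)
  simp only [quadRule, Fin.sum_univ_three, Fin.sum_univ_two]
  simp only [Matrix.cons_val_zero, Matrix.cons_val_one, Matrix.head_cons,
    Matrix.cons_val_two, Matrix.tail_cons]
  rw [div_lt_iff₀ (by nlinarith)]
  nlinarith

/-- The Quadratic Rule is not proportional: for ballots (0.9,0.1), (0.5,0.5),
(0.4,0.6) its output differs from the proportional (mean) allocation (0.6,0.4);
in particular the first coordinate of the quadratic output is strictly below 0.6. -/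
theorem quadratic_not_proportional :
    quadRule (![![(0.9:ℝ),0.1],![0.5,0.5],![0.4,0.6]]) ≠ ![0.6, 0.4] ∧
    quadRule (![![(0.9:ℝ),0.1],![0.5,0.5],![0.4,0.6]]) 0 < 0.6 := by
  refine ⟨fun h => ?_, quad_lt⟩
  have := quad_lt
  rw [h] at this
  simp at this
end

section
/- The Midpoint Rule does not satisfy proportionality: for three voters over two projects with ballots (1,0), (1,0), (0,1), the Midpoint Rule outputs (1,0), yet proportionality would require the second project to receive at least 1/3 of the budget. -/
/-- The Midpoint Rule does not satisfy proportionality: for ballots (1,0), (1,0),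
(0,1), the ballot (1,0) minimizes the sum of ℓ1 distances (so the rule outputs
(1,0)), yet proportionality (coalition {voter 3} of size 1 ≥ 3/3 voting
exclusively for project 2) would require project 2 to get at least 1/3. -/
theorem midpoint_not_proportional :
    (∀ i : Fin 3,
      ∑ j, l1 ![(1:ℝ),0] (![![(1:ℝ),0],![1,0],![0,1]] j) ≤
      ∑ j, l1 (![![(1:ℝ),0],![1,0],![0,1]] i) (![![(1:ℝ),0],![1,0],![0,1]] j)) ∧
    ¬ ((1:ℝ)/3 ≤ (![(1:ℝ),0] : Fin 2 → ℝ) 1) := by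
  constructor
  · intro i
    fin_cases i <;>
      simp [l1, Fin.sum_univ_succ]
  · norm_num
end

section
/- The Normalized Median Rule is monotone: if a single voter increases their vote for project p while all other ballot entries (of all voters, on all projects) are unchanged, then the normalized-median allocation to project p does not decrease. -/
noncomputable def med (n : ℕ) (x : Fin n → ℝ) : ℝ :=
  ((List.ofFn x).mergeSort (fun a b => decide (a ≤ b))).getD ((n - 1) / 2) 0

theorem List.SortedLE.getElem_le_iff_lt_countP {α : Type*} [LinearOrder α] {l : List α}
    (hl : l.SortedLE) {k : ℕ} (hk : k < l.length) {v : α} :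
    l[k] ≤ v ↔ k < l.countP (· ≤ v) := by
  constructor
  · intro hkv
    have hprefix : ∀ a ∈ l.take (k + 1), a ≤ v := by
      intro a ha
      obtain ⟨i, hi, rfl⟩ := List.mem_take_iff_getElem.1 ha
      exact (hl.getElem_le_getElem_of_le (by omega)).trans hkv
    calc k < (l.take (k + 1)).length := by simp only [List.length_take]; omega
      _ = (l.take (k + 1)).countP (· ≤ v) := (List.countP_eq_length.2 (by simpa using hprefix)).symm
      _ ≤ l.countP (· ≤ v) := (List.take_sublist _ _).countP_le
  · intro hcount
    by_contra! hvk
    have hsuffix : (l.drop k).countP (· ≤ v) = 0 := by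
      refine List.countP_eq_zero.2 fun a ha => ?_
      obtain ⟨i, hi, rfl⟩ := List.mem_drop_iff_getElem.1 ha
      simpa using hvk.trans_le (hl.getElem_le_getElem_of_le (by omega))
    have hsplit := List.countP_append (p := (· ≤ v)) (l₁ := l.take k) (l₂ := l.drop k)
    rw [List.take_append_drop] at hsplit
    have hprefix := (l.take k).countP_le_length (p := (· ≤ v))
    simp only [List.length_take] at hprefix
    omega

theorem List.countP_ofFn {α : Type*} {n : ℕ} (x : Fin n → α) (p : α → Prop) [DecidablePred p] :
    (List.ofFn x).countP (p ·) = (Finset.univ.filter fun i => p (x i)).card := by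
  simp [List.ofFn_eq_map, Fin.univ_def, Finset.card_def, List.countP_eq_length_filter,
    List.filter_map, Function.comp_def]

section Median

open Finset

theorem med_le_iff {n : ℕ} (hn : 0 < n) (x : Fin n → ℝ) (v : ℝ) :
    med n x ≤ v ↔ (n - 1) / 2 < #{i | x i ≤ v} := by
  have hk : (n - 1) / 2 < ((List.ofFn x).mergeSort (fun a b => decide (a ≤ b))).length := by
    simp only [List.length_mergeSort, List.length_ofFn]; omega
  rw [med, List.getD_eq_getElem _ _ hk, List.sortedLE_mergeSort.getElem_le_iff_lt_countP,
    (List.mergeSort_perm _ _).countP_eq, List.countP_ofFn]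

theorem med_mono {n : ℕ} : Monotone (med n) := by
  intro x y hxy
  rcases n.eq_zero_or_pos with rfl | hn
  · simp [med]
  rw [med_le_iff hn]
  calc (n - 1) / 2 < #{i | y i ≤ med n y} := (med_le_iff hn y _).1 le_rfl
    _ ≤ #{i | x i ≤ med n y} :=
      card_le_card (monotone_filter_right _ fun i _ h => (hxy i).trans h)

theorem med_nonneg {n : ℕ} {x : Fin n → ℝ} (hx : 0 ≤ x) : 0 ≤ med n x := by
  rw [med, List.getD_eq_getElem?_getD]
  cases h : ((List.ofFn x).mergeSort (fun a b => decide (a ≤ b)))[(n - 1) / 2]? with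
  | none => exact le_rfl
  | some a =>
    obtain ⟨i, rfl⟩ := List.mem_ofFn.1 (List.mem_mergeSort.1 (List.mem_of_getElem? h))
    exact hx i

end Median

theorem div_sum_le_div_sum_of_le_of_eq_off {ι K : Type*} [Fintype ι] [Field K] [LinearOrder K]
    [IsStrictOrderedRing K] {f g : ι → K} {p : ι} (hf : 0 ≤ f) (hp : f p ≤ g p)
    (hq : ∀ q ≠ p, g q = f q) (hpos : 0 < ∑ q, f q) :
    f p / ∑ q, f q ≤ g p / ∑ q, g q := by
  have hsum : ∑ q, g q = ∑ q, f q + (g p - f p) := by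
    rw [← sub_eq_iff_eq_add', ← Finset.sum_sub_distrib,
      Finset.sum_eq_single p (fun q _ hqp => by rw [hq q hqp, sub_self]) (by simp)]
  have hle : f p ≤ ∑ q, f q := Finset.single_le_sum (fun q _ => hf q) (Finset.mem_univ p)
  rw [hsum, div_le_div_iff₀ hpos (by linarith)]
  nlinarith [mul_nonneg (sub_nonneg.2 hp) (sub_nonneg.2 hle)]

theorem normalized_median_monotone_general {n m : ℕ}
    (X X' : Fin n → Fin m → ℝ) (j : Fin n) (p : Fin m)
    (hnn : ∀ i q, 0 ≤ X i q)
    (hinc : X j p ≤ X' j p)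
    (hfix : ∀ i q, (i, q) ≠ (j, p) → X' i q = X i q)
    (hpos : 0 < ∑ q, med n (fun i => X i q)) :
    med n (fun i => X i p) / (∑ q, med n (fun i => X i q)) ≤
      med n (fun i => X' i p) / (∑ q, med n (fun i => X' i q)) := by
  refine div_sum_le_div_sum_of_le_of_eq_off (fun q => med_nonneg (hnn · q))
    (med_mono fun i => ?_) (fun q hq => congrArg (med n) (funext fun i => hfix i q ?_)) hpos
  · by_cases hij : i = j
    · exact hij ▸ hinc
    · exact (hfix i p (by simp [hij])).ge
  · simp [hq]

/-- The Normalized Median Rule is monotone: if a single voter increases their vote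
for project p (all other entries unchanged), the normalized-median allocation to p
does not decrease. -/
theorem normalized_median_monotone {n m : ℕ} (hn : 0 < n)
    (X X' : Fin n → Fin m → ℝ) (j : Fin n) (p : Fin m)
    (hnn : ∀ i q, 0 ≤ X i q) (hnn' : ∀ i q, 0 ≤ X' i q)
    (hinc : X j p ≤ X' j p)
    (hfix : ∀ i q, (i, q) ≠ (j, p) → X' i q = X i q)
    (hpos : 0 < ∑ q, med n (fun i => X i q))
    (hpos' : 0 < ∑ q, med n (fun i => X' i q)) :
    med n (fun i => X i p) / (∑ q, med n (fun i => X i q)) ≤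
      med n (fun i => X' i p) / (∑ q, med n (fun i => X' i q)) :=
  normalized_median_monotone_general X X' j p hnn hinc hfix hpos
end

section
/- The Quadratic Rule is not strategyproof: with three voters over two projects and true ballots (0.7,0.3), (0.4,0.6), (0.3,0.7), the Quadratic Rule's truthful outcome a satisfies ||a − (0.7,0.3)||_1 > ||a' − (0.7,0.3)||_1, where a' is the outcome when voter 1 misreports (0.8,0.2) and the others report truthfully. -/
lemma sqrt_bounds (a b c : ℝ) (ha : 0 ≤ a) (h1 : b^2 ≤ a) (h2 : a ≤ c^2) (hb : 0 ≤ b)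
    (hc : 0 ≤ c) : b ≤ Real.sqrt a ∧ Real.sqrt a ≤ c := by
  constructor
  · exact (Real.le_sqrt hb ha).mpr h1
  · nlinarith [Real.sq_sqrt ha, Real.sqrt_nonneg a]

/-- The Quadratic Rule is not strategyproof: with true ballots (0.7,0.3),
(0.4,0.6), (0.3,0.7), voter 1's ℓ1 distance from the truthful outcome is strictly
larger than from the outcome where voter 1 misreports (0.8,0.2). -/
theorem quadratic_not_strategyproof :
    l1 (quadRule (![![(0.8:ℝ),0.2],![0.4,0.6],![0.3,0.7]])) ![(0.7:ℝ),0.3] <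
      l1 (quadRule (![![(0.7:ℝ),0.3],![0.4,0.6],![0.3,0.7]])) ![(0.7:ℝ),0.3] := by
  have h2 := sqrt_bounds 0.2 0.447 0.448 (by norm_num) (by norm_num) (by norm_num) (by norm_num) (by norm_num)
  have h3 := sqrt_bounds 0.3 0.547 0.548 (by norm_num) (by norm_num) (by norm_num) (by norm_num) (by norm_num)
  have h4 := sqrt_bounds 0.4 0.632 0.633 (by norm_num) (by norm_num) (by norm_num) (by norm_num) (by norm_num)
  have h6 := sqrt_bounds 0.6 0.774 0.775 (by norm_num) (by norm_num) (by norm_num) (by norm_num) (by norm_num)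
  have h7 := sqrt_bounds 0.7 0.836 0.837 (by norm_num) (by norm_num) (by norm_num) (by norm_num) (by norm_num)
  have h8 := sqrt_bounds 0.8 0.894 0.895 (by norm_num) (by norm_num) (by norm_num) (by norm_num) (by norm_num)
  simp only [l1, quadRule, Fin.sum_univ_two, Fin.sum_univ_three, Matrix.cons_val_zero,
    Matrix.cons_val_one, Matrix.head_cons, Matrix.cons_val_two, Matrix.tail_cons]
  obtain ⟨h2a, h2b⟩ := h2; obtain ⟨h3a, h3b⟩ := h3; obtain ⟨h4a, h4b⟩ := h4
  obtain ⟨h6a, h6b⟩ := h6; obtain ⟨h7a, h7b⟩ := h7; obtain ⟨h8a, h8b⟩ := h8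
  set s2 := Real.sqrt 0.2; set s3 := Real.sqrt 0.3; set s4 := Real.sqrt 0.4
  set s6 := Real.sqrt 0.6; set s7 := Real.sqrt 0.7; set s8 := Real.sqrt 0.8
  have hD : (0:ℝ) < s7 + s3 + (s4 + s6) + (s3 + s7) := by linarith
  have hD' : (0:ℝ) < s8 + s2 + (s4 + s6) + (s3 + s7) := by linarith
  have e1 : (s8 + s4 + s3) / (s8 + s2 + (s4 + s6) + (s3 + s7)) - 0.7 < 0 := by
    rw [sub_neg, div_lt_iff₀ hD']; nlinarith
  have e2 : (0:ℝ) < (s2 + s6 + s7) / (s8 + s2 + (s4 + s6) + (s3 + s7)) - 0.3 := by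
    rw [sub_pos, lt_div_iff₀ hD']; nlinarith
  have e3 : (s7 + s4 + s3) / (s7 + s3 + (s4 + s6) + (s3 + s7)) - 0.7 < 0 := by
    rw [sub_neg, div_lt_iff₀ hD]; nlinarith
  have e4 : (0:ℝ) < (s3 + s6 + s7) / (s7 + s3 + (s4 + s6) + (s3 + s7)) - 0.3 := by
    rw [sub_pos, lt_div_iff₀ hD]; nlinarith
  rw [abs_of_neg e1, abs_of_pos e2, abs_of_neg e3, abs_of_pos e4]
  have key : (s2 + s6 + s7 - (s8 + s4 + s3)) / (s8 + s2 + (s4 + s6) + (s3 + s7)) <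
      (s3 + s6 + s7 - (s7 + s4 + s3)) / (s7 + s3 + (s4 + s6) + (s3 + s7)) := by
    rw [div_lt_div_iff₀ hD' hD]; nlinarith
  rw [sub_div, sub_div] at key
  linarith
end
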